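/- arXiv:1703.07843 — 2 statements merged into one kernel-verified Lean document; each statement's English description precedes it below -/
import Mathlib

section
/- Every minimal blocking set (t = 1 case: every line meets S and through every point of S there is a tangent line) in a finite projective plane of order n has size at most n√n + 1. -/
/-!
Let `τ` be the number of tangents of `S` and `c x` the number of tangents through the point `x`.
Each tangent meets `S` once and has `n + 1` points, and two distinct tangents meet in exactly one
point, so `∑_{S} c = τ`, `∑_{P} c = (n + 1) τ` and `∑_{P} c² = n τ + τ²`. Since every point of `S`
is on a tangent, `|S| ≤ τ`. Cauchy–Schwarz on the complement of `S`, together with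
`∑_{S} c² ≥ ∑_{S} c`, gives `n² τ + |Sᶜ| ≤ |Sᶜ| (n + τ)`, and with `|S| + |Sᶜ| = n² + n + 1` and
`|S| ≤ τ` this rearranges to `(|S| - 1)² ≤ n³`.
-/

open Configuration Finset

namespace Configuration

variable {P L : Type*} [Membership P L]

variable (L) in
open scoped Classical in
noncomputable def tangentLines [Fintype L] (S : Finset P) : Finset L :=
  {ℓ | #{p ∈ S | p ∈ ℓ} = 1}

theorem mem_tangentLines [Fintype L] {S : Finset P} {ℓ : L} :
    ℓ ∈ tangentLines L S ↔ Nat.card {q : P // q ∈ S ∧ q ∈ ℓ} = 1 := by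
  simp_rw [tangentLines, mem_filter_univ, ← Nat.card_eq_finsetCard, mem_filter]

section Incidence

open scoped Classical

theorem sum_card_filter_mem_comm (A : Finset L) (B : Finset P) :
    ∑ x ∈ B, #{ℓ ∈ A | x ∈ ℓ} = ∑ ℓ ∈ A, #{x ∈ B | x ∈ ℓ} :=
  sum_card_bipartiteAbove_eq_sum_card_bipartiteBelow (fun x ℓ => x ∈ ℓ)

theorem sum_card_tangentLines_through [Fintype L] (S : Finset P) :
    ∑ p ∈ S, #{ℓ ∈ tangentLines L S | p ∈ ℓ} = #(tangentLines L S) := by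
  rw [sum_card_filter_mem_comm, card_eq_sum_ones]
  refine sum_congr rfl fun ℓ hℓ => ?_
  simpa [tangentLines] using hℓ

theorem card_le_card_tangentLines [Fintype L] {S : Finset P}
    (hS : ∀ p ∈ S, ∃ ℓ ∈ tangentLines L S, p ∈ ℓ) :
    #S ≤ #(tangentLines L S) := by
  rw [← sum_card_tangentLines_through, card_eq_sum_ones]
  refine sum_le_sum fun p hp => ?_
  obtain ⟨ℓ, hℓ, hpℓ⟩ := hS p hp
  exact card_pos.mpr ⟨ℓ, mem_filter.mpr ⟨hℓ, hpℓ⟩⟩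

end Incidence

namespace ProjectivePlane

open scoped Classical

variable [Fintype P] [Fintype L] [ProjectivePlane P L]

variable (P) in
theorem card_filter_mem (ℓ : L) : #{x : P | x ∈ ℓ} = order P L + 1 := by
  rw [← pointCount_eq P ℓ, pointCount, Nat.card_eq_fintype_card, Fintype.card_subtype]

omit [Fintype L] in
theorem card_filter_mem_and_mem {ℓ m : L} (h : ℓ ≠ m) : #{x : P | x ∈ ℓ ∧ x ∈ m} = 1 := by
  obtain ⟨x, hx, hu⟩ := HasPoints.existsUnique_point P L ℓ m h
  exact card_eq_one.mpr ⟨x, by ext y; simpa using ⟨hu y, fun h => h ▸ hx⟩⟩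

variable (P) in
theorem sum_card_filter_mem (A : Finset L) :
    ∑ x : P, #{ℓ ∈ A | x ∈ ℓ} = (order P L + 1) * #A := by
  rw [sum_card_filter_mem_comm, sum_congr rfl fun ℓ _ => card_filter_mem P ℓ, sum_const,
    smul_eq_mul, mul_comm]

theorem sum_card_filter_mem_and_mem {ℓ : L} {A : Finset L} (hℓ : ℓ ∈ A) :
    ∑ m ∈ A, #{x : P | x ∈ ℓ ∧ x ∈ m} = order P L + #A := by
  rw [← add_sum_erase A _ hℓ,
    sum_congr rfl fun m hm => card_filter_mem_and_mem (ne_of_mem_erase hm).symm]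
  simp only [and_self, card_filter_mem, sum_const, smul_eq_mul, mul_one]
  have := card_erase_add_one hℓ
  omega

variable (P) in
theorem sum_card_filter_mem_sq (A : Finset L) :
    ∑ x : P, #{ℓ ∈ A | x ∈ ℓ} ^ 2 = order P L * #A + #A ^ 2 := by
  calc ∑ x : P, #{ℓ ∈ A | x ∈ ℓ} ^ 2
      = ∑ ℓ ∈ A, ∑ m ∈ A, #{x : P | x ∈ ℓ ∧ x ∈ m} := by
        simp only [sq, card_filter, sum_mul_sum, ite_zero_mul_ite_zero, mul_one]
        rw [sum_comm]
        exact sum_congr rfl fun ℓ _ => sum_comm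
    _ = ∑ ℓ ∈ A, (order P L + #A) := sum_congr rfl fun ℓ hℓ => sum_card_filter_mem_and_mem hℓ
    _ = order P L * #A + #A ^ 2 := by rw [sum_const, smul_eq_mul]; ring

theorem order_sq_mul_card_tangentLines_add_le (S : Finset P) :
    order P L ^ 2 * #(tangentLines L S) + #Sᶜ
      ≤ #Sᶜ * (order P L + #(tangentLines L S)) := by
  set n := order P L
  set τ := #(tangentLines L S)
  set c : P → ℕ := fun x => #{ℓ ∈ tangentLines L S | x ∈ ℓ}
  have hS : ∑ x ∈ S, c x = τ := sum_card_tangentLines_through S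
  have hcompl : ∑ x ∈ Sᶜ, c x = n * τ := by
    have := sum_add_sum_compl S c
    rw [hS, sum_card_filter_mem] at this
    linarith
  have hsq_compl : ∑ x ∈ Sᶜ, c x ^ 2 + τ ≤ n * τ + τ ^ 2 := by
    have hc_le_sq : ∑ x ∈ S, c x ≤ ∑ x ∈ S, c x ^ 2 :=
      sum_le_sum fun x _ => Nat.le_self_pow two_ne_zero _
    have := sum_add_sum_compl S (c · ^ 2)
    rw [sum_card_filter_mem_sq] at this
    linarith
  have hcauchy : (n * τ) ^ 2 ≤ #Sᶜ * ∑ x ∈ Sᶜ, c x ^ 2 := hcompl ▸ sq_sum_le_card_mul_sum_sq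
  rcases Nat.eq_zero_or_pos τ with hτ | hτ
  · have := (one_lt_order P L).le
    rw [hτ]
    nlinarith
  · refine Nat.le_of_mul_le_mul_left ?_ hτ
    nlinarith

end ProjectivePlane

end Configuration

theorem sq_sub_one_le_cube_of_card_bounds {n k t N : ℕ} (hn : 1 ≤ n)
    (hkN : k + N = n ^ 2 + n + 1) (hkt : k ≤ t) (h : n ^ 2 * t + N ≤ N * (n + t)) :
    ((k : ℤ) - 1) ^ 2 ≤ n ^ 3 := by
  zify at *
  rcases le_or_gt (k : ℤ) (n + 1) with hk | hk
  · nlinarith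
  · nlinarith [mul_le_mul_of_nonneg_right hkt (by linarith : (0 : ℤ) ≤ k - n - 1)]

theorem natCast_le_mul_sqrt_add_one {k n : ℕ} (h : ((k : ℤ) - 1) ^ 2 ≤ n ^ 3) :
    (k : ℝ) ≤ n * √n + 1 := by
  have hR : ((k : ℝ) - 1) ^ 2 ≤ (n : ℝ) ^ 3 := by exact_mod_cast h
  have hsqrt : √((n : ℝ) ^ 3) = n * √n := by
    rw [pow_succ, Real.sqrt_mul' _ (Nat.cast_nonneg _), Real.sqrt_sq (Nat.cast_nonneg _)]
  linarith [le_abs_self ((k : ℝ) - 1), Real.abs_le_sqrt hR]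

theorem bruen_thas_minimal_blocking_set_general (P L : Type*) [Membership P L]
    [Fintype P] [Fintype L] [ProjectivePlane P L]
    (n : ℕ) (hn : ProjectivePlane.order P L = n)
    (S : Finset P)
    (hmin : ∀ p ∈ S, ∃ ℓ : L, p ∈ ℓ ∧ Nat.card {q : P // q ∈ S ∧ q ∈ ℓ} = 1) :
    (S.card : ℝ) ≤ n * Real.sqrt n + 1 := by
  classical
  have htangent : ∀ p ∈ S, ∃ ℓ ∈ tangentLines L S, p ∈ ℓ := fun p hp =>
    let ⟨ℓ, hpℓ, hℓ⟩ := hmin p hp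
    ⟨ℓ, mem_tangentLines.mpr hℓ, hpℓ⟩
  subst hn
  apply natCast_le_mul_sqrt_add_one
  exact sq_sub_one_le_cube_of_card_bounds (ProjectivePlane.one_lt_order P L).le
    (card_add_card_compl S ▸ ProjectivePlane.card_points P L) (card_le_card_tangentLines htangent)
    (ProjectivePlane.order_sq_mul_card_tangentLines_add_le S)

theorem bruen_thas_minimal_blocking_set (P L : Type*) [Membership P L]
    [Fintype P] [Fintype L] [ProjectivePlane P L]
    (n : ℕ) (hn : ProjectivePlane.order P L = n)
    (S : Finset P)
    (hblock : ∀ ℓ : L, ∃ p ∈ S, p ∈ ℓ)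
    (hmin : ∀ p ∈ S, ∃ ℓ : L, p ∈ ℓ ∧ Nat.card {q : P // q ∈ S ∧ q ∈ ℓ} = 1) :
    (S.card : ℝ) ≤ n * Real.sqrt n + 1 :=
  bruen_thas_minimal_blocking_set_general P L n hn S hmin
end

section
/- Let S be a minimal blocking set in a symmetric 2-(v, k, λ) design (every block meets S, and through every point of S there is a block meeting S in exactly one point). Then |S| ≤ v·(1 + √(k−λ))/(k + √(k−λ)). -/
/-!
Every point of `S` lies on a tangent block (one meeting `S` in a single point), and distinct points
lie on distinct tangents, so there are at least `|S|` tangents. In a symmetric design every point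
lies on `k` blocks and `λ(v - 1) = k(k - 1)`, so the first two moments of `β ↦ |S ∩ β|` depend only
on `|S|`. Cauchy–Schwarz, applied separately to a family `L` of blocks and to its complement, then
gives the incidence bound `(v·i(S,L) - k|S||L|)² ≤ (k - λ)|S|(v - |S|)|L|(v - |L|)`. For `L` the
tangents, `i(S,L) = |L| ≥ |S|`, and the bound becomes `k|S| - v ≤ √(k - λ)(v - |S|)`.
-/

open Finset

theorem card_mul_sq_sum_le_of_sum_eq_zero {ι R : Type*} [CommRing R] [LinearOrder R]
    [IsStrictOrderedRing R] {s t : Finset ι} (hts : t ⊆ s) {f : ι → R}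
    (hf : ∑ i ∈ s, f i = 0) :
    #s * (∑ i ∈ t, f i) ^ 2 ≤ #t * (#s - #t) * ∑ i ∈ s, f i ^ 2 := by
  classical
  have hcompl : ∑ i ∈ s \ t, f i = -∑ i ∈ t, f i := by
    rw [eq_neg_iff_add_eq_zero, sum_sdiff hts, hf]
  have hin := sq_sum_le_card_mul_sum_sq (s := t) (f := f)
  have hout := sq_sum_le_card_mul_sum_sq (s := s \ t) (f := f)
  rw [hcompl, neg_sq] at hout
  have hcard : (#s : R) = #(s \ t) + #t := by
    rw [← Nat.cast_add, card_sdiff_add_card_eq_card hts]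
  rw [hcard, add_sub_cancel_right, ← sum_sdiff hts (f := fun i ↦ f i ^ 2)]
  linear_combination (#(s \ t) : R) * hin + (#t : R) * hout

theorem le_div_of_sq_sub_le_mul_sq {s v k m : ℝ} (hm : 0 ≤ m) (hk : 0 < k) (hsv : s ≤ v)
    (h : (k * s - v) ^ 2 ≤ m * (v - s) ^ 2) :
    s ≤ v * (1 + √m) / (k + √m) := by
  have hroot : k * s - v ≤ √m * (v - s) := by
    refine (abs_le_of_sq_le_sq' ?_ (mul_nonneg (Real.sqrt_nonneg m) (sub_nonneg.2 hsv))).2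
    rwa [mul_pow, Real.sq_sqrt hm]
  rw [le_div_iff₀ (by positivity)]
  linarith

namespace BlockDesign

variable {X B : Type*} [Fintype B] [DecidableEq X] {blk : B → Finset X} {k lam v : ℕ}

def tangents (blk : B → Finset X) (S : Finset X) : Finset B := {β | #(S ∩ blk β) = 1}

theorem card_le_card_tangents {S : Finset X}
    (hS : ∀ p ∈ S, ∃ β, p ∈ blk β ∧ #(S ∩ blk β) = 1) : #S ≤ #(tangents blk S) := by
  refine card_le_card_of_forall_subsingleton (fun p β ↦ p ∈ blk β)
    (fun p hp ↦ ?_) (fun β hβ ↦ ?_)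
  · obtain ⟨β, hpβ, hβ⟩ := hS p hp
    exact ⟨β, by simpa [tangents] using hβ, hpβ⟩
  · obtain ⟨a, ha⟩ := card_eq_one.1 (mem_filter.1 hβ).2
    rw [← filter_mem_eq_inter] at ha
    rw [← coe_filter, ha, coe_singleton]
    exact Set.subsingleton_singleton

theorem sum_card_inter_tangents (S : Finset X) :
    ∑ β ∈ tangents blk S, #(S ∩ blk β) = #(tangents blk S) := by
  rw [card_eq_sum_ones]
  exact sum_congr rfl fun β hβ ↦ (mem_filter.1 hβ).2

theorem sum_card_inter_eq (hr : ∀ x, #{β | x ∈ blk β} = k) (S : Finset X) :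
    ∑ β, #(S ∩ blk β) = k * #S := by
  have := sum_card_bipartiteAbove_eq_sum_card_bipartiteBelow (fun β p ↦ p ∈ blk β)
    (s := univ) (t := S)
  simp_rw [bipartiteAbove, filter_mem_eq_inter, bipartiteBelow, hr] at this
  rw [this, sum_const, smul_eq_mul, mul_comm]

theorem sum_sq_card_inter_eq_sum_sum (S : Finset X) :
    ∑ β, #(S ∩ blk β) ^ 2 = ∑ p ∈ S, ∑ q ∈ S, #{β | p ∈ blk β ∧ q ∈ blk β} := by
  simp_rw [sq, ← filter_mem_eq_inter, card_filter, sum_mul_sum, ite_zero_mul_ite_zero, mul_one]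
  rw [sum_comm]
  exact sum_congr rfl fun p _ ↦ sum_comm

theorem sum_sq_card_inter_eq (hr : ∀ x, #{β | x ∈ blk β} = k)
    (hlam : ∀ x y, x ≠ y → #{β | x ∈ blk β ∧ y ∈ blk β} = lam) (S : Finset X) :
    ∑ β, (#(S ∩ blk β) : ℝ) ^ 2 = #S * (lam * (#S - 1) + k) := by
  have hrow : ∀ p ∈ S, ∑ q ∈ S, (#{β | p ∈ blk β ∧ q ∈ blk β} : ℝ) = lam * (#S - 1) + k := by
    intro p hp
    rw [← add_sum_erase S _ hp,
      sum_congr rfl fun q hq ↦ by rw [hlam p q (ne_of_mem_erase hq).symm],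
      sum_const, nsmul_eq_mul, cast_card_erase_of_mem hp]
    simp only [and_self, hr]
    ring
  have := congrArg (Nat.cast : ℕ → ℝ) (sum_sq_card_inter_eq_sum_sum (blk := blk) S)
  push_cast at this
  rw [this, sum_congr rfl hrow, sum_const, nsmul_eq_mul]

variable [Fintype X]

theorem card_blocks_through_mul_pred (hsize : ∀ β, #(blk β) = k)
    (hlam : ∀ x y, x ≠ y → #{β | x ∈ blk β ∧ y ∈ blk β} = lam) (x : X) :
    #{β | x ∈ blk β} * (k - 1) = (Fintype.card X - 1) * lam := by
  rw [← card_univ, ← card_erase_of_mem (mem_univ x)]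
  refine card_mul_eq_card_mul (fun β y ↦ y ∈ blk β) (fun β hβ ↦ ?_) (fun y hy ↦ ?_)
  · have : (univ.erase x).bipartiteAbove (fun β y ↦ y ∈ blk β) β = (blk β).erase x := by
      ext y; simp [bipartiteAbove, and_comm]
    rw [this, card_erase_of_mem (mem_filter.1 hβ).2, hsize]
  · rw [bipartiteBelow, filter_filter]
    exact hlam x y (ne_of_mem_erase hy).symm

theorem card_blocks_through_eq (hb : Fintype.card B = Fintype.card X) (hk : 2 ≤ k)
    (hsize : ∀ β, #(blk β) = k)
    (hlam : ∀ x y, x ≠ y → #{β | x ∈ blk β ∧ y ∈ blk β} = lam) (x : X) :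
    #{β | x ∈ blk β} = k := by
  have hconst : ∀ y, #{β | y ∈ blk β} = #{β | x ∈ blk β} := fun y ↦
    Nat.eq_of_mul_eq_mul_right (by omega : 0 < k - 1) <| by
      rw [card_blocks_through_mul_pred hsize hlam, card_blocks_through_mul_pred hsize hlam]
  have hcount := card_mul_eq_card_mul (s := univ) (t := univ) (fun β y ↦ y ∈ blk β)
    (m := k) (n := #{β | x ∈ blk β}) (fun β _ ↦ by simpa [bipartiteAbove] using hsize β)
    (fun y _ ↦ by simpa [bipartiteBelow] using hconst y)
  rw [card_univ, card_univ, hb] at hcount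
  exact (Nat.eq_of_mul_eq_mul_left (Fintype.card_pos_iff.2 ⟨x⟩) hcount).symm

theorem lam_mul_sub_one_eq (hv : Fintype.card X = v) (hb : Fintype.card B = v) (hv0 : 0 < v)
    (hk : 2 ≤ k) (hsize : ∀ β, #(blk β) = k)
    (hlam : ∀ x y, x ≠ y → #{β | x ∈ blk β ∧ y ∈ blk β} = lam) :
    (lam : ℝ) * (v - 1) = k * (k - 1) := by
  obtain ⟨x⟩ : Nonempty X := Fintype.card_pos_iff.1 (hv ▸ hv0)
  have h := card_blocks_through_mul_pred hsize hlam x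
  rw [card_blocks_through_eq (hb.trans hv.symm) hk hsize hlam, hv] at h
  have h' := congrArg (Nat.cast : ℕ → ℝ) h
  push_cast [Nat.one_le_of_lt hv0, Nat.one_le_of_lt hk] at h'
  linarith

theorem incidence_bound (hv : Fintype.card X = v) (hb : Fintype.card B = v) (hv0 : 0 < v)
    (hk : 2 ≤ k) (hsize : ∀ β, #(blk β) = k)
    (hlam : ∀ x y, x ≠ y → #{β | x ∈ blk β ∧ y ∈ blk β} = lam) (S : Finset X) (L : Finset B) :
    ((v : ℝ) * ∑ β ∈ L, (#(S ∩ blk β) : ℝ) - k * #S * #L) ^ 2 ≤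
      (k - lam) * #S * (v - #S) * (#L * (v - #L)) := by
  have hr := card_blocks_through_eq (hb.trans hv.symm) hk hsize hlam
  have hsum : ∑ β, (#(S ∩ blk β) : ℝ) = k * #S := by exact_mod_cast sum_card_inter_eq hr S
  have hsq := sum_sq_card_inter_eq hr hlam S
  have hfisher := lam_mul_sub_one_eq hv hb hv0 hk hsize hlam
  -- `f β` is `v` times the deviation of `|S ∩ β|` from its mean `k|S|/v`.
  set f : B → ℝ := fun β ↦ v * #(S ∩ blk β) - k * #S
  have hf : ∑ β, f β = 0 := by
    simp only [f, sum_sub_distrib, ← mul_sum, hsum, sum_const, card_univ, hb, nsmul_eq_mul]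
    ring
  have hf2 : ∑ β, f β ^ 2 = v * ((k - lam) * #S * (v - #S)) := by
    simp only [f, sub_sq, mul_pow, sum_add_distrib, sum_sub_distrib, ← mul_sum, ← sum_mul, hsum,
      hsq, sum_const, card_univ, hb, nsmul_eq_mul]
    linear_combination (v * #S ^ 2 : ℝ) * hfisher
  have hfL : ∑ β ∈ L, f β = v * ∑ β ∈ L, (#(S ∩ blk β) : ℝ) - k * #S * #L := by
    simp only [f, sum_sub_distrib, ← mul_sum, sum_const, nsmul_eq_mul]
    ring
  have hCS := card_mul_sq_sum_le_of_sum_eq_zero (subset_univ L) hf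
  rw [card_univ, hb, hfL, hf2] at hCS
  have hv0' : (0 : ℝ) < v := by exact_mod_cast hv0
  refine le_of_mul_le_mul_left ?_ hv0'
  linear_combination hCS

theorem sq_sub_le_of_forall_mem_tangent (hv : Fintype.card X = v) (hb : Fintype.card B = v)
    (hv0 : 0 < v) (hk : 2 ≤ k) (hlamk : lam ≤ k) (hsize : ∀ β, #(blk β) = k)
    (hlam : ∀ x y, x ≠ y → #{β | x ∈ blk β ∧ y ∈ blk β} = lam) {S : Finset X}
    (hS : S.Nonempty) (htan : ∀ p ∈ S, ∃ β, p ∈ blk β ∧ #(S ∩ blk β) = 1) :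
    ((k : ℝ) * #S - v) ^ 2 ≤ (k - lam) * (v - #S) ^ 2 := by
  have hi := incidence_bound hv hb hv0 hk hsize hlam S (tangents blk S)
  rw [← Nat.cast_sum, sum_card_inter_tangents] at hi
  set T := tangents blk S
  have hST : (#S : ℝ) ≤ #T := by exact_mod_cast card_le_card_tangents htan
  have hS0 : (0 : ℝ) < #S := by exact_mod_cast hS.card_pos
  have hSv : (#S : ℝ) ≤ v := by exact_mod_cast hv ▸ card_le_univ S
  have hkl : (0 : ℝ) ≤ k - lam := sub_nonneg.2 (by exact_mod_cast hlamk)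
  have hT : #T * ((k : ℝ) * #S - v) ^ 2 ≤ (k - lam) * #S * (v - #S) * (v - #T) :=
    le_of_mul_le_mul_left (by linear_combination hi) (hS0.trans_le hST)
  refine le_of_mul_le_mul_left ?_ hS0
  calc (#S : ℝ) * ((k : ℝ) * #S - v) ^ 2 ≤ #T * ((k : ℝ) * #S - v) ^ 2 := by gcongr
    _ ≤ ((k : ℝ) - lam) * #S * (v - #S) * (v - #T) := hT
    _ ≤ ((k : ℝ) - lam) * #S * (v - #S) * (v - #S) := by
      have := sub_nonneg.2 hSv
      gcongr
    _ = (#S : ℝ) * ((k - lam) * (v - #S) ^ 2) := by ring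

end BlockDesign

theorem minimal_blocking_set_symmetric_design_general (X B : Type*) [Fintype X] [Fintype B]
    (blk : B → Finset X) (v k lam : ℕ)
    (hv : Fintype.card X = v) (hb : Fintype.card B = v)
    (hv0 : 0 < v) (hk : 2 ≤ k) (hlamk : lam < k)
    (hksize : ∀ β : B, (blk β).card = k)
    (hlam : ∀ x y : X, x ≠ y → Nat.card {β : B // x ∈ blk β ∧ y ∈ blk β} = lam)
    (S : Finset X)
    (hmin : ∀ p ∈ S, ∃ β : B, p ∈ blk β ∧ Nat.card {q : X // q ∈ S ∧ q ∈ blk β} = 1) :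
    (S.card : ℝ) ≤ (v : ℝ) * (1 + Real.sqrt ((k : ℝ) - lam)) / ((k : ℝ) + Real.sqrt ((k : ℝ) - lam)) := by
  classical
  have hlam' : ∀ x y, x ≠ y → #{β | x ∈ blk β ∧ y ∈ blk β} = lam := fun x y hxy ↦ by
    simpa only [Nat.card_eq_fintype_card, Fintype.card_subtype] using hlam x y hxy
  have htan : ∀ p ∈ S, ∃ β, p ∈ blk β ∧ #(S ∩ blk β) = 1 := fun p hp ↦ by
    simpa [Nat.card_eq_fintype_card, Fintype.card_subtype, filter_and, filter_mem_eq_inter]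
      using hmin p hp
  have hkl : (0 : ℝ) ≤ k - lam := sub_nonneg.2 (by exact_mod_cast hlamk.le)
  rcases S.eq_empty_or_nonempty with rfl | hS
  · simp only [card_empty, Nat.cast_zero]
    positivity
  · exact le_div_of_sq_sub_le_mul_sq hkl (by positivity) (by exact_mod_cast hv ▸ card_le_univ S)
      (BlockDesign.sq_sub_le_of_forall_mem_tangent hv hb hv0 hk hlamk.le hksize hlam' hS htan)

/-- Upper bound on minimal blocking sets in symmetric 2-(v,k,λ) designs. -/
theorem minimal_blocking_set_symmetric_design (X B : Type*) [Fintype X] [Fintype B]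
    (blk : B → Finset X) (v k lam : ℕ)
    (hv : Fintype.card X = v) (hb : Fintype.card B = v)
    (hv0 : 0 < v) (hk : 2 ≤ k) (hlam0 : 0 < lam) (hlamk : lam < k)
    (hksize : ∀ β : B, (blk β).card = k)
    (hlam : ∀ x y : X, x ≠ y → Nat.card {β : B // x ∈ blk β ∧ y ∈ blk β} = lam)
    (S : Finset X)
    (hblock : ∀ β : B, ∃ p ∈ S, p ∈ blk β)
    (hmin : ∀ p ∈ S, ∃ β : B, p ∈ blk β ∧ Nat.card {q : X // q ∈ S ∧ q ∈ blk β} = 1) :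
    (S.card : ℝ) ≤ (v : ℝ) * (1 + Real.sqrt ((k : ℝ) - lam)) / ((k : ℝ) + Real.sqrt ((k : ℝ) - lam)) :=
  minimal_blocking_set_symmetric_design_general X B blk v k lam hv hb hv0 hk hlamk hksize hlam S
    hmin
end
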